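/- The additive semigroup (ℤ + √2·ℤ) ∩ ℝ_{≥0} is not finitely generated as a semigroup. -/

import Mathlib

/-!
The group `ℤ + √2·ℤ` is dense in `ℝ` because `√2` is irrational, so its nonnegative part has
positive elements below every positive element. A finitely generated submonoid of the
nonnegative reals cannot: each of its positive elements dominates a positive generator, hence
the least positive generator.
-/

namespace AddSubmonoid

variable {α : Type*} [AddCommMonoid α]

theorem eq_zero_or_exists_pos_le_of_mem_closure [PartialOrder α] [IsOrderedAddMonoid α]
    {t : Set α} (ht : ∀ g ∈ t, 0 ≤ g) {x : α} (hx : x ∈ closure t) :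
    x = 0 ∨ ∃ g ∈ t, 0 < g ∧ g ≤ x := by
  induction hx using closure_induction with
  | mem g hg => exact (ht g hg).eq_or_lt.imp Eq.symm fun hg0 => ⟨g, hg, hg0, le_rfl⟩
  | zero => exact Or.inl rfl
  | add x y _ _ hx hy =>
    rcases hx with rfl | ⟨g, hg, hg0, hgx⟩
    · simpa only [zero_add] using hy
    have hy0 : 0 ≤ y := by
      rcases hy with rfl | ⟨g', -, hg'0, hg'y⟩
      exacts [le_rfl, hg'0.le.trans hg'y]
    exact Or.inr ⟨g, hg, hg0, le_add_of_le_of_nonneg hgx hy0⟩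

theorem not_fg_of_forall_exists_pos_lt [LinearOrder α] [IsOrderedAddMonoid α]
    (S : AddSubmonoid α) (hS : ∀ x ∈ S, 0 ≤ x) (hpos : ∃ x ∈ S, 0 < x)
    (hsmall : ∀ x ∈ S, 0 < x → ∃ y ∈ S, 0 < y ∧ y < x) : ¬ S.FG := by
  rintro ⟨t, rfl⟩
  have ht : ∀ g ∈ (t : Set α), 0 ≤ g := fun g hg => hS g (subset_closure hg)
  obtain ⟨x, hx, hx0⟩ := hpos
  obtain ⟨g, hg, hg0, -⟩ := (eq_zero_or_exists_pos_le_of_mem_closure ht hx).resolve_left hx0.ne'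
  obtain ⟨ε, hε, hεmin⟩ := (t.filter (0 < ·)).exists_min_image id ⟨g, Finset.mem_filter.2 ⟨hg, hg0⟩⟩
  rw [Finset.mem_filter] at hε
  obtain ⟨y, hy, hy0, hyε⟩ := hsmall ε (subset_closure hε.1) hε.2
  obtain ⟨g', hg', hg'0, hg'y⟩ :=
    (eq_zero_or_exists_pos_le_of_mem_closure ht hy).resolve_left hy0.ne'
  exact (hg'y.trans_lt hyε).not_ge (hεmin g' (Finset.mem_filter.2 ⟨hg', hg'0⟩))

end AddSubmonoid

theorem Real.dense_addSubgroupClosure_one_sqrt_two :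
    Dense (AddSubgroup.closure {1, √2} : Set ℝ) :=
  dense_addSubgroupClosure_pair_iff.2 <| by
    rw [one_div]
    exact irrational_sqrt_two.inv

/-- The additive semigroup (with `0`) `(ℤ + √2·ℤ) ∩ ℝ_{≥0}` is not finitely generated
as a semigroup. -/
theorem not_fg_nonneg_part_of_sqrt_two_quasilattice
    (S : AddSubmonoid ℝ)
    (hS : (S : Set ℝ) =
      {x : ℝ | x ∈ AddSubgroup.closure ({1, Real.sqrt 2} : Set ℝ) ∧ 0 ≤ x}) :
    ¬ ∃ t : Finset ℝ, AddSubmonoid.closure (t : Set ℝ) = S := by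
  have hmem (x : ℝ) : x ∈ S ↔ x ∈ AddSubgroup.closure {1, √2} ∧ 0 ≤ x := Set.ext_iff.1 hS x
  refine S.not_fg_of_forall_exists_pos_lt (fun x hx => ((hmem x).1 hx).2)
    ⟨1, (hmem 1).2 ⟨AddSubgroup.subset_closure (by simp), zero_le_one⟩, one_pos⟩ ?_
  intro x _ hx0
  obtain ⟨y, hy, hy0, hyx⟩ := Real.dense_addSubgroupClosure_one_sqrt_two.exists_between hx0
  exact ⟨y, (hmem y).2 ⟨hy, hy0.le⟩, hy0, hyx⟩
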